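/- (Second Rule of Triangles) Let n ≥ 3 and let A and B be the z-matrix and w-matrix of a singular sequence. Then for all 1 ≤ i < j < k ≤ n, (a_{ii} + a_{ij} + a_{ik} + a_{jj} + a_{jk} + a_{kk}) · m_{i,j,k} ≠ 9, where m_{i,j,k} = max{ a_{ii} + a_{ij} + a_{ik}, a_{ji} + a_{jj} + a_{jk}, a_{ki} + a_{kj} + a_{kk} }. The same statement holds with A replaced by B. -/

import Mathlib

open Filter Finset

/-- `Zq δ z k l` is the quantity `Z_{lk} = δ_{kl}^3 · (z_k − z_l)`
(and, applied to `w`, the quantity `W_{lk}`). -/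
noncomputable def Zq {n : ℕ} (δ : Fin n → Fin n → ℂ) (z : Fin n → ℂ) (k l : Fin n) : ℂ :=
  δ k l ^ 3 * (z k - z l)

/-- A singular sequence of normalized central configurations for the masses `m`:
sequences `z^{(N)}, w^{(N)} ∈ ℂ^n`, symmetric `δ^{(N)}`, and positive reals `ε_N → 0`
such that every term satisfies the central configuration equations
`z_k = ∑_{l≠k} m_l Z_{lk}`, `w_k = ∑_{l≠k} m_l W_{lk}`, the normalization
`δ_{kl}^2 z_{kl} w_{kl} = 1` (`k ≠ l`), the maximum of the `|z_k|, |Z_{kl}|`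
(resp. `|w_k|, |W_{kl}|`) equals `ε_N^{-2}`, and all the sequences
`ε_N^2 z_k, ε_N^2 w_k, ε_N^2 Z_{kl}, ε_N^2 W_{kl}` converge. -/
structure SingularSeq (n : ℕ) (m : Fin n → ℂ) : Type where
  z : ℕ → Fin n → ℂ
  w : ℕ → Fin n → ℂ
  delta : ℕ → Fin n → Fin n → ℂ
  eps : ℕ → ℝ
  eps_pos : ∀ N, 0 < eps N
  eps_lim : Tendsto eps atTop (nhds 0)
  delta_symm : ∀ N, ∀ k l : Fin n, delta N k l = delta N l k
  eq_z : ∀ N, ∀ k : Fin n, z N k = ∑ l ∈ univ.erase k, m l * Zq (delta N) (z N) k l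
  eq_w : ∀ N, ∀ k : Fin n, w N k = ∑ l ∈ univ.erase k, m l * Zq (delta N) (w N) k l
  normalize : ∀ N, ∀ k l : Fin n, k ≠ l →
    delta N k l ^ 2 * (z N l - z N k) * (w N l - w N k) = 1
  maxZ : ∀ N, IsGreatest
      ({x : ℝ | ∃ k, x = ‖z N k‖} ∪
        {x : ℝ | ∃ k l, k ≠ l ∧ x = ‖Zq (delta N) (z N) k l‖})
      (eps N ^ (-2 : ℤ))
  maxW : ∀ N, IsGreatest
      ({x : ℝ | ∃ k, x = ‖w N k‖} ∪
        {x : ℝ | ∃ k l, k ≠ l ∧ x = ‖Zq (delta N) (w N) k l‖})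
      (eps N ^ (-2 : ℤ))
  conv_z : ∀ k : Fin n, ∃ L : ℂ,
    Tendsto (fun N => (eps N : ℂ) ^ 2 * z N k) atTop (nhds L)
  conv_w : ∀ k : Fin n, ∃ L : ℂ,
    Tendsto (fun N => (eps N : ℂ) ^ 2 * w N k) atTop (nhds L)
  conv_Z : ∀ k l : Fin n, k ≠ l → ∃ L : ℂ,
    Tendsto (fun N => (eps N : ℂ) ^ 2 * Zq (delta N) (z N) k l) atTop (nhds L)
  conv_W : ∀ k l : Fin n, k ≠ l → ∃ L : ℂ,
    Tendsto (fun N => (eps N : ℂ) ^ 2 * Zq (delta N) (w N) k l) atTop (nhds L)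

/-- `A` and `B` are the z-matrix and the w-matrix of the singular sequence `S`:
symmetric `{0,1}`-matrices whose entries record which of the (convergent) sequences
`ε_N^2 z_i`, `ε_N^2 Z_{ij}` (resp. `ε_N^2 w_i`, `ε_N^2 W_{ij}`) have nonzero limit. -/
structure IsZWMatrices {n : ℕ} {m : Fin n → ℂ} (S : SingularSeq n m)
    (A B : Matrix (Fin n) (Fin n) ℕ) : Prop where
  zeroOne_A : ∀ i j, A i j = 0 ∨ A i j = 1
  symm_A : ∀ i j, A i j = A j i
  zeroOne_B : ∀ i j, B i j = 0 ∨ B i j = 1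
  symm_B : ∀ i j, B i j = B j i
  diag_A : ∀ i, A i i = 1 ↔
    ¬ Tendsto (fun N => (S.eps N : ℂ) ^ 2 * S.z N i) atTop (nhds 0)
  off_A : ∀ i j, i ≠ j → (A i j = 1 ↔
    ¬ Tendsto (fun N => (S.eps N : ℂ) ^ 2 * Zq (S.delta N) (S.z N) i j) atTop (nhds 0))
  diag_B : ∀ i, B i i = 1 ↔
    ¬ Tendsto (fun N => (S.eps N : ℂ) ^ 2 * S.w N i) atTop (nhds 0)
  off_B : ∀ i j, i ≠ j → (B i j = 1 ↔
    ¬ Tendsto (fun N => (S.eps N : ℂ) ^ 2 * Zq (S.delta N) (S.w N) i j) atTop (nhds 0))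

/-!
If `a_pp = a_pq = a_pr = 1` and `a_qq = a_rr = 0`, then `z_pq, z_pr, Z_pq, Z_pr` all have exact
order `ε⁻²`, while `z_qr = o(ε⁻²)` and `Z_qr = O(ε⁻²)`. Cubing the normalization gives
`Z_kl² z_kl w_kl³ = 1`, so `w_pq` and `w_pr`, hence `w_qr`, are `O(ε²)`, and then
`1 = Z_qr² z_qr w_qr³ = o(1)`. The total of a triangle is at most 6 and each of its row sums at
most 3, so the product is 9 only as `3 * 3`, which forces exactly this pattern in some row.
Exchanging `z` and `w` gives the statement for the w-matrix.
-/

open Asymptotics Topology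

theorem full_row_of_triangle_mul_max_eq_nine {a b c d e f : ℕ}
    (ha : a ≤ 1) (hb : b ≤ 1) (hc : c ≤ 1) (hd : d ≤ 1) (he : e ≤ 1) (hf : f ≤ 1)
    (h : (a + b + c + d + e + f) * max (a + b + c) (max (b + d + e) (c + e + f)) = 9) :
    (a = 1 ∧ b = 1 ∧ c = 1 ∧ d = 0 ∧ f = 0) ∨
      (d = 1 ∧ b = 1 ∧ e = 1 ∧ a = 0 ∧ f = 0) ∨
      (f = 1 ∧ c = 1 ∧ e = 1 ∧ a = 0 ∧ d = 0) := by
  generalize hM : max (a + b + c) (max (b + d + e) (c + e + f)) = M at h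
  have hM3 : M ≤ 3 := by omega
  interval_cases M <;> omega

theorem rescaled_normalization {e d zk zl wk wl : ℂ} (he : e ≠ 0)
    (h : d ^ 2 * (zl - zk) * (wl - wk) = 1) :
    (e ^ 2 * (d ^ 3 * (zk - zl))) ^ 2 * (e ^ 2 * (zl - zk)) * ((wl - wk) / e ^ 2) ^ 3 = 1 := by
  field_simp
  linear_combination ((d ^ 2 * (zl - zk) * (wl - wk)) ^ 2 + d ^ 2 * (zl - zk) * (wl - wk) + 1) * h

theorem isBigO_one_of_sq_mul_mul_pow_three_eq_one {α 𝕜 : Type*} [NormedField 𝕜] {l : Filter α}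
    {u v x : α → 𝕜} {U V : 𝕜} (hU : U ≠ 0) (hV : V ≠ 0)
    (hu : Tendsto u l (𝓝 U)) (hv : Tendsto v l (𝓝 V)) (h : ∀ a, u a ^ 2 * v a * x a ^ 3 = 1) :
    x =O[l] (fun _ => (1 : 𝕜)) := by
  have hx : x ^ 3 = fun a => (u a ^ 2 * v a)⁻¹ := by
    funext a
    exact eq_inv_of_mul_eq_one_right (h a)
  have hone : (fun _ : α => (1 : 𝕜)) ^ 3 = fun _ => 1 := by
    funext; simp
  refine IsBigO.of_pow three_ne_zero ?_
  rw [hx, hone]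
  exact ((hu.pow 2).mul hv).inv₀ (by positivity) |>.isBigO_one 𝕜

namespace SingularSeq

variable {n : ℕ} {m : Fin n → ℂ}

def swap (S : SingularSeq n m) : SingularSeq n m where
  z := S.w
  w := S.z
  delta := S.delta
  eps := S.eps
  eps_pos := S.eps_pos
  eps_lim := S.eps_lim
  delta_symm := S.delta_symm
  eq_z := S.eq_w
  eq_w := S.eq_z
  normalize N k l hkl := by rw [← S.normalize N k l hkl]; ring
  maxZ := S.maxW
  maxW := S.maxZ
  conv_z := S.conv_w
  conv_w := S.conv_z
  conv_Z := S.conv_W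
  conv_W := S.conv_Z

theorem norm_eps_sq_mul_Zq_le_one (S : SingularSeq n m) (N : ℕ) {k l : Fin n} (hkl : k ≠ l) :
    ‖(S.eps N : ℂ) ^ 2 * Zq (S.delta N) (S.z N) k l‖ ≤ 1 := by
  have hle : ‖Zq (S.delta N) (S.z N) k l‖ ≤ S.eps N ^ (-2 : ℤ) :=
    (S.maxZ N).2 (Or.inr ⟨k, l, hkl, rfl⟩)
  have hε := S.eps_pos N
  rw [norm_mul, norm_pow, Complex.norm_real, Real.norm_of_nonneg hε.le]
  calc S.eps N ^ 2 * ‖Zq (S.delta N) (S.z N) k l‖ ≤ S.eps N ^ 2 * S.eps N ^ (-2 : ℤ) := by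
        gcongr
    _ = 1 := by simp [hε.ne']

theorem not_full_row (S : SingularSeq n m) {p q r : Fin n} (hpq : p ≠ q) (hpr : p ≠ r)
    (hqr : q ≠ r)
    (hp : ¬ Tendsto (fun N => (S.eps N : ℂ) ^ 2 * S.z N p) atTop (𝓝 0))
    (hZpq : ¬ Tendsto (fun N => (S.eps N : ℂ) ^ 2 * Zq (S.delta N) (S.z N) p q) atTop (𝓝 0))
    (hZpr : ¬ Tendsto (fun N => (S.eps N : ℂ) ^ 2 * Zq (S.delta N) (S.z N) p r) atTop (𝓝 0))
    (hq : Tendsto (fun N => (S.eps N : ℂ) ^ 2 * S.z N q) atTop (𝓝 0))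
    (hr : Tendsto (fun N => (S.eps N : ℂ) ^ 2 * S.z N r) atTop (𝓝 0)) : False := by
  set e : ℕ → ℂ := fun N => S.eps N
  have he N : e N ≠ 0 := Complex.ofReal_ne_zero.2 (S.eps_pos N).ne'
  set ω : Fin n → Fin n → ℕ → ℂ := fun k l N => (S.w N l - S.w N k) / e N ^ 2
  have hscaled {k l : Fin n} (hkl : k ≠ l) (N : ℕ) :
      (e N ^ 2 * Zq (S.delta N) (S.z N) k l) ^ 2 * (e N ^ 2 * (S.z N l - S.z N k)) *
        ω k l N ^ 3 = 1 :=
    rescaled_normalization (he N) (S.normalize N k l hkl)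
  obtain ⟨c, hc⟩ := S.conv_z p
  obtain ⟨Z₁, hZ₁⟩ := S.conv_Z p q hpq
  obtain ⟨Z₂, hZ₂⟩ := S.conv_Z p r hpr
  have hc0 : c ≠ 0 := by rintro rfl; exact hp hc
  have hzq : Tendsto (fun N => e N ^ 2 * (S.z N q - S.z N p)) atTop (𝓝 (0 - c)) := by
    simpa only [mul_sub] using hq.sub hc
  have hzr : Tendsto (fun N => e N ^ 2 * (S.z N r - S.z N p)) atTop (𝓝 (0 - c)) := by
    simpa only [mul_sub] using hr.sub hc
  have hωpq : ω p q =O[atTop] (fun _ => (1 : ℂ)) :=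
    isBigO_one_of_sq_mul_mul_pow_three_eq_one (by rintro rfl; exact hZpq hZ₁)
      (sub_ne_zero.2 (Ne.symm hc0)) hZ₁ hzq (hscaled hpq)
  have hωpr : ω p r =O[atTop] (fun _ => (1 : ℂ)) :=
    isBigO_one_of_sq_mul_mul_pow_three_eq_one (by rintro rfl; exact hZpr hZ₂)
      (sub_ne_zero.2 (Ne.symm hc0)) hZ₂ hzr (hscaled hpr)
  have hωqr : ω q r =O[atTop] (fun _ => (1 : ℂ)) :=
    (hωpr.sub hωpq).congr_left fun N => by simp only [ω]; ring
  have hZqr : (fun N => e N ^ 2 * Zq (S.delta N) (S.z N) q r) =O[atTop] (fun _ => (1 : ℂ)) :=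
    IsBigO.of_bound 1 (Eventually.of_forall fun N => by
      rw [norm_one, mul_one]; exact S.norm_eps_sq_mul_Zq_le_one N hqr)
  have hzqr : (fun N => e N ^ 2 * (S.z N r - S.z N q)) =o[atTop] (fun _ => (1 : ℂ)) :=
    (isLittleO_one_iff ℂ).2 (by simpa only [mul_sub, sub_zero] using hr.sub hq)
  have hone : (fun _ : ℕ => (1 : ℂ)) =o[atTop] (fun _ => (1 : ℂ)) := by
    simpa only [hscaled hqr, one_pow, mul_one] using
      ((hZqr.pow 2).mul_isLittleO hzqr).mul_isBigO (hωqr.pow 3)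
  exact isLittleO_irrefl (Frequently.of_forall fun _ => one_ne_zero) hone

end SingularSeq

namespace IsZWMatrices

variable {n : ℕ} {m : Fin n → ℂ} {S : SingularSeq n m} {A B : Matrix (Fin n) (Fin n) ℕ}

theorem swap (h : IsZWMatrices S A B) : IsZWMatrices S.swap B A :=
  ⟨h.zeroOne_B, h.symm_B, h.zeroOne_A, h.symm_A, h.diag_B, h.off_B, h.diag_A, h.off_A⟩

theorem le_one_A (h : IsZWMatrices S A B) (i j : Fin n) : A i j ≤ 1 := by
  rcases h.zeroOne_A i j with h | h <;> omega

theorem not_full_row (h : IsZWMatrices S A B) {p q r : Fin n} (hpq : p ≠ q) (hpr : p ≠ r)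
    (hqr : q ≠ r) (hp : A p p = 1) (hApq : A p q = 1) (hApr : A p r = 1) (hq : A q q = 0)
    (hr : A r r = 0) : False :=
  S.not_full_row hpq hpr hqr ((h.diag_A p).1 hp) ((h.off_A p q hpq).1 hApq)
    ((h.off_A p r hpr).1 hApr) (not_not.1 <| mt (h.diag_A q).2 (by omega))
    (not_not.1 <| mt (h.diag_A r).2 (by omega))

theorem triangle_ne_nine (h : IsZWMatrices S A B) {i j k : Fin n} (hij : i ≠ j) (hik : i ≠ k)
    (hjk : j ≠ k) :
    (A i i + A i j + A i k + A j j + A j k + A k k) *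
      max (A i i + A i j + A i k) (max (A j i + A j j + A j k) (A k i + A k j + A k k)) ≠ 9 := by
  intro h9
  rw [h.symm_A j i, h.symm_A k i, h.symm_A k j] at h9
  rcases full_row_of_triangle_mul_max_eq_nine (h.le_one_A i i) (h.le_one_A i j) (h.le_one_A i k)
      (h.le_one_A j j) (h.le_one_A j k) (h.le_one_A k k) h9 with
    ⟨hi, hij', hik', hj, hk⟩ | ⟨hj, hij', hjk', hi, hk⟩ | ⟨hk, hik', hjk', hi, hj⟩
  · exact h.not_full_row hij hik hjk hi hij' hik' hj hk
  · exact h.not_full_row hij.symm hjk hik hj (h.symm_A j i ▸ hij') hjk' hi hk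
  · exact h.not_full_row hik.symm hjk.symm hij hk (h.symm_A k i ▸ hik') (h.symm_A k j ▸ hjk') hi hj

end IsZWMatrices

theorem second_rule_of_triangles_general (n : ℕ) (m : Fin n → ℂ)
    (S : SingularSeq n m) (A B : Matrix (Fin n) (Fin n) ℕ)
    (hAB : IsZWMatrices S A B) :
    ∀ i j k : Fin n, i < j → j < k →
      (A i i + A i j + A i k + A j j + A j k + A k k) *
          max (A i i + A i j + A i k)
            (max (A j i + A j j + A j k) (A k i + A k j + A k k)) ≠ 9 ∧
      (B i i + B i j + B i k + B j j + B j k + B k k) *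
          max (B i i + B i j + B i k)
            (max (B j i + B j j + B j k) (B k i + B k j + B k k)) ≠ 9 := by
  intro i j k hij hjk
  have hik := hij.trans hjk
  exact ⟨hAB.triangle_ne_nine hij.ne hik.ne hjk.ne, hAB.swap.triangle_ne_nine hij.ne hik.ne hjk.ne⟩

theorem second_rule_of_triangles (n : ℕ) (hn : 3 ≤ n) (m : Fin n → ℂ)
    (hm : ∀ I : Finset (Fin n), I.Nonempty → ∑ k ∈ I, m k ≠ 0)
    (S : SingularSeq n m) (A B : Matrix (Fin n) (Fin n) ℕ)
    (hAB : IsZWMatrices S A B) :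
    ∀ i j k : Fin n, i < j → j < k →
      (A i i + A i j + A i k + A j j + A j k + A k k) *
          max (A i i + A i j + A i k)
            (max (A j i + A j j + A j k) (A k i + A k j + A k k)) ≠ 9 ∧
      (B i i + B i j + B i k + B j j + B j k + B k k) *
          max (B i i + B i j + B i k)
            (max (B j i + B j j + B j k) (B k i + B k j + B k k)) ≠ 9 :=
  second_rule_of_triangles_general n m S A B hAB
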